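/- Let 𝔤 be a 2-dimensional real Lie algebra with a nondegenerate symmetric bilinear form B, and let ∇ be its Levi-Civita product. There exists a nonzero x ∈ 𝔤 such that B(∇_u x, v) + B(∇_v x, u) = 0 for all u, v ∈ 𝔤 if and only if 𝔤 is abelian. -/

import Mathlib

/-!
Summing the Koszul formula for `(u, x, v)` and `(v, x, u)` shows that `x` is a Killing vector
exactly when `ad x` is `B`-skew. In a nonabelian 2-dimensional Lie algebra spanned by `a, b`,
every bracket is a multiple of `c = ⁅a, b⁆`; choosing `w` with `B c w ≠ 0`, skewness of `ad x`
forces first `⁅w, x⁆ = 0` and then `⁅u, x⁆ = 0` for all `u`, so `x` is central, hence zero.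
-/

open Submodule

section

variable {K 𝔤 : Type*} [Field K] [LieRing 𝔤] [LieAlgebra K 𝔤]

theorem leviCivita_add_swap_eq_lie_add_swap [NeZero (2 : K)] (B : LinearMap.BilinForm K 𝔤)
    (N : 𝔤 → 𝔤 → 𝔤)
    (hK : ∀ x y z, 2 * B (N x y) z = B ⁅x, y⁆ z - B ⁅y, z⁆ x + B ⁅z, x⁆ y) (x u v : 𝔤) :
    B (N u x) v + B (N v x) u = B ⁅u, x⁆ v + B ⁅v, x⁆ u := by
  have skew : ∀ y z w : 𝔤, B ⁅y, z⁆ w = -B ⁅z, y⁆ w := fun y z w => by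
    rw [← lie_skew, map_neg, LinearMap.neg_apply]
  refine mul_left_cancel₀ (two_ne_zero (α := K)) ?_
  linear_combination hK u x v + hK v x u - skew x v u - skew x u v + skew v u x

theorem lie_eq_zero_of_lie_mem_span_of_skew [NeZero (2 : K)] (B : LinearMap.BilinForm K 𝔤)
    {c x : 𝔤} (hc : ∀ u v : 𝔤, ⁅u, v⁆ ∈ K ∙ c) (hBc : B c ≠ 0)
    (hskew : ∀ u v, B ⁅u, x⁆ v + B ⁅v, x⁆ u = 0) (u : 𝔤) : ⁅u, x⁆ = 0 := by
  obtain ⟨w, hw⟩ : ∃ w, B c w ≠ 0 := by simpa [DFunLike.ne_iff] using hBc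
  obtain ⟨r, hr⟩ := mem_span_singleton.mp (hc w x)
  obtain ⟨s, hs⟩ := mem_span_singleton.mp (hc u x)
  have hwx : ⁅w, x⁆ = 0 := by
    have h : (2 * r) * B c w = 0 := by
      linear_combination (by simpa [← hr] using hskew w w : r * B c w + r * B c w = 0)
    rw [← hr, (mul_eq_zero.mp ((mul_eq_zero.mp h).resolve_right hw)).resolve_left two_ne_zero,
      zero_smul]
  have h : s * B c w = 0 := by simpa [← hs, hwx] using hskew u w
  rw [← hs, (mul_eq_zero.mp h).resolve_right hw, zero_smul]

variable {a b : 𝔤}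

theorem linearIndependent_pair_of_lie_ne_zero (hab : ⁅a, b⁆ ≠ 0) :
    LinearIndependent K ![a, b] := by
  refine LinearIndependent.pair_iff.mpr fun s t hst => ⟨?_, ?_⟩
  · have h : ⁅s • a + t • b, b⁆ = 0 := by rw [hst, zero_lie]
    simpa [hab] using h
  · have h : ⁅a, s • a + t • b⁆ = 0 := by rw [hst, lie_zero]
    simpa [hab] using h

theorem span_pair_eq_top_of_lie_ne_zero (hdim : Module.finrank K 𝔤 = 2) (hab : ⁅a, b⁆ ≠ 0) :
    span K {a, b} = ⊤ := by
  rw [← Matrix.range_cons_cons_empty a b ![]]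
  exact (linearIndependent_pair_of_lie_ne_zero hab).span_eq_top_of_card_eq_finrank (by simp [hdim])

theorem lie_mem_span_lie_of_span_pair_eq_top (hspan : span K {a, b} = ⊤) (u v : 𝔤) :
    ⁅u, v⁆ ∈ K ∙ ⁅a, b⁆ := by
  obtain ⟨p, q, rfl⟩ := mem_span_pair.mp (hspan ▸ mem_top : u ∈ span K {a, b})
  obtain ⟨r, s, rfl⟩ := mem_span_pair.mp (hspan ▸ mem_top : v ∈ span K {a, b})
  refine mem_span_singleton.mpr ⟨p * s - q * r, ?_⟩
  simp only [add_lie, lie_add, smul_lie, lie_smul, lie_self, smul_zero, add_zero, zero_add]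
  rw [← lie_skew b a]
  module

theorem eq_zero_of_forall_lie_eq_zero_of_span_pair_eq_top (hspan : span K {a, b} = ⊤)
    (hab : ⁅a, b⁆ ≠ 0) {x : 𝔤} (hx : ∀ u : 𝔤, ⁅u, x⁆ = 0) : x = 0 := by
  obtain ⟨p, q, rfl⟩ := mem_span_pair.mp (hspan ▸ mem_top : x ∈ span K {a, b})
  have hq : q = 0 := by simpa [hab] using hx a
  have hba : ⁅b, a⁆ ≠ 0 := by rwa [← lie_skew, neg_ne_zero]
  have hp : p = 0 := by simpa [hba] using hx b
  simp [hp, hq]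

end

theorem stmt_7 {𝔤 : Type*} [LieRing 𝔤] [LieAlgebra ℝ 𝔤]
    (hdim : Module.finrank ℝ 𝔤 = 2)
    (B : LinearMap.BilinForm ℝ 𝔤)
    (hBnd : ∀ x, (∀ y, B x y = 0) → x = 0)
    (N : 𝔤 → 𝔤 → 𝔤)
    (hK : ∀ x y z, 2 * B (N x y) z = B ⁅x, y⁆ z - B ⁅y, z⁆ x + B ⁅z, x⁆ y) :
    (∃ x : 𝔤, x ≠ 0 ∧ ∀ u v : 𝔤, B (N u x) v + B (N v x) u = 0) ↔
      ∀ x y : 𝔤, ⁅x, y⁆ = 0 := by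
  simp only [leviCivita_add_swap_eq_lie_add_swap B N hK]
  constructor
  · rintro ⟨x, hx0, hskew⟩ a b
    by_contra hab
    have hspan := span_pair_eq_top_of_lie_ne_zero hdim hab
    have hBc : B ⁅a, b⁆ ≠ 0 := fun h => hab (hBnd _ (LinearMap.congr_fun h))
    have hcentral := lie_eq_zero_of_lie_mem_span_of_skew B
      (lie_mem_span_lie_of_span_pair_eq_top hspan) hBc hskew
    exact hx0 (eq_zero_of_forall_lie_eq_zero_of_span_pair_eq_top hspan hab hcentral)
  · intro habel
    have : Nontrivial 𝔤 := Module.nontrivial_of_finrank_eq_succ hdim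
    obtain ⟨x, hx⟩ := exists_ne (0 : 𝔤)
    exact ⟨x, hx, fun u v => by simp [habel]⟩
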